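/- arXiv:2504.02139 — 4 statements merged into one kernel-verified Lean document; each statement's English description precedes it below -/
import Mathlib

section
/- Let x = (x_1, ..., x_d) ∈ ℝ^d with a unique index ℓ such that |x_ℓ| > |x_i| for all i ≠ ℓ. Define g : [0,1) → ℝ by g(t) = (∑_{i=1}^d |x_i|^{1/t})^t for t > 0 and g(0) = |x_ℓ|. Then g is differentiable at 0 with g'(0) = 0. -/
open Filter Real Topology

theorem lp_norm_in_t_hasDerivAt_zero (d : ℕ) (x : Fin d → ℝ) (ℓ : Fin d)
    (hℓ : ∀ i, i ≠ ℓ → |x i| < |x ℓ|)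
    (g : ℝ → ℝ)
    (hg : ∀ t : ℝ, 0 < t → g t = (∑ i, |x i| ^ (1 / t)) ^ t)
    (hg0 : g 0 = |x ℓ|) :
    HasDerivWithinAt g 0 (Set.Ico (0:ℝ) 1) 0 := by
  rcases eq_or_lt_of_le (abs_nonneg (x ℓ)) with hM0 | hM0
  · -- degenerate case: |x ℓ| = 0, so x ≡ 0 and g ≡ 0 on the set
    have hall : ∀ i, |x i| = 0 := by
      intro i
      by_cases h : i = ℓ
      · subst h; exact hM0.symm
      · have h1 := hℓ i h
        rw [← hM0] at h1
        exact absurd h1 (not_lt.mpr (abs_nonneg _))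
    have hgz : ∀ t ∈ Set.Ico (0:ℝ) 1, g t = 0 := by
      intro t ht
      rcases eq_or_lt_of_le ht.1 with h0 | h0
      · rw [← h0, hg0, ← hM0]
      · rw [hg t h0]
        have : ∀ i : Fin d, |x i| ^ (1/t) = 0 := by
          intro i
          rw [hall i, Real.zero_rpow (by positivity)]
        simp only [this, Finset.sum_const_zero]
        exact Real.zero_rpow (ne_of_gt h0)
    have h00 : g 0 = 0 := by rw [hg0, ← hM0]
    exact (hasDerivWithinAt_const (0:ℝ) _ (0:ℝ)).congr hgz h00
  · set M := |x ℓ| with hMdef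
    rw [hasDerivWithinAt_iff_tendsto_slope]
    have hset : Set.Ico (0:ℝ) 1 \ {0} = Set.Ioo (0:ℝ) 1 := by
      exact Set.Ico_diff_left
    rw [hset]
    set B : ℝ → ℝ := fun t => ∑ i ∈ Finset.univ.erase ℓ, (|x i| / M) ^ (1/t) with hB
    have key : ∀ t ∈ Set.Ioo (0:ℝ) 1, 0 ≤ slope g 0 t ∧ slope g 0 t ≤ M * B t := by
      intro t ht
      have ht0 : 0 < t := ht.1
      have htne : t ≠ 0 := ne_of_gt ht0
      have hBnn : 0 ≤ B t := Finset.sum_nonneg fun i _ => Real.rpow_nonneg (by positivity) _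
      have hMt : (M ^ (1/t)) ^ t = M := by
        rw [← Real.rpow_mul hM0.le, one_div_mul_cancel htne, Real.rpow_one]
      have hsum : (∑ i, |x i| ^ (1/t)) = M ^ (1/t) * (1 + B t) := by
        rw [← Finset.add_sum_erase _ _ (Finset.mem_univ ℓ)]
        rw [mul_add, mul_one, Finset.mul_sum]
        congr 1
        apply Finset.sum_congr rfl
        intro i _
        rw [← Real.mul_rpow hM0.le (by positivity), mul_div_cancel₀ _ (ne_of_gt hM0)]
      have hgt : g t = M * (1 + B t) ^ t := by
        rw [hg t ht0, hsum, Real.mul_rpow (Real.rpow_nonneg hM0.le _) (by linarith), hMt]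
      have h1B : (1:ℝ) ≤ (1 + B t) ^ t :=
        Real.one_le_rpow (by linarith) ht0.le
      have hslope : slope g 0 t = (g t - M) / t := by
        simp [slope, hg0, hMdef, div_eq_inv_mul]
      constructor
      · rw [hslope]
        apply div_nonneg _ ht0.le
        rw [hgt]
        nlinarith
      · rw [hslope, div_le_iff₀ ht0]
        have hbern : (1 + B t) ^ t ≤ 1 + t * B t :=
          rpow_one_add_le_one_add_mul_self (by linarith) ht0.le ht.2.le
        rw [hgt]
        nlinarith
    have hBtend : Tendsto (fun t => M * B t) (𝓝[Set.Ioo (0:ℝ) 1] 0) (𝓝 0) := by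
      have : Tendsto B (𝓝[Set.Ioo (0:ℝ) 1] 0) (𝓝 0) := by
        have hsum0 : Tendsto B (𝓝[Set.Ioo (0:ℝ) 1] 0)
            (𝓝 (∑ i ∈ Finset.univ.erase ℓ, (0:ℝ))) := by
          apply tendsto_finset_sum
          intro i hi
          have hi' : i ≠ ℓ := Finset.ne_of_mem_erase hi
          have hc1 : |x i| / M < 1 := (div_lt_one hM0).mpr (hℓ i hi')
          have hc0 : (-1:ℝ) < |x i| / M := by
            have : (0:ℝ) ≤ |x i| / M := by positivity
            linarith
          have h1 : Tendsto (fun y : ℝ => (|x i| / M) ^ y) atTop (𝓝 0) :=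
            tendsto_rpow_atTop_of_base_lt_one _ hc0 hc1
          have h2 : Tendsto (fun t : ℝ => 1/t) (𝓝[Set.Ioo (0:ℝ) 1] 0) atTop := by
            simp only [one_div]
            exact tendsto_inv_nhdsGT_zero.mono_left
              (nhdsWithin_mono 0 Set.Ioo_subset_Ioi_self)
          exact h1.comp h2
        rwa [Finset.sum_const_zero] at hsum0
      have h := this.const_mul M
      rwa [mul_zero] at h
    apply squeeze_zero'
    · filter_upwards [self_mem_nhdsWithin] with t ht using (key t ht).1
    · filter_upwards [self_mem_nhdsWithin] with t ht using (key t ht).2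
    · exact hBtend
end

section
/- Let x ∈ ℝ^d with a unique index ℓ such that |x_ℓ| > |x_i| for all i ≠ ℓ. Then for each index i, the quantity |x_i|^{1/t} · log(∑_{j=1}^d |x_j/x_i|^{1/t}) / (∑_{j=1}^d |x_j|^{1/t}) tends to 0 as t → 0⁺, where if i ≠ ℓ we additionally assume x_i ≠ 0. -/
/-!
Factoring `|x i| ^ (1 / t)` out of the denominator turns the summand into `log S / S`, where
`S t = ∑ j, |x j / x i| ^ (1 / t)`. As `t → 0⁺`, i.e. `1 / t → ∞`, the sum `S` tends to `1` when
`i = ℓ` (every other ratio has absolute value `< 1`) and to `∞` when `i ≠ ℓ` (the term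
`|x ℓ / x i| ^ (1 / t)` blows up); in both cases `log S / S → 0`. If `x i = 0` the summand
vanishes for all `t > 0`.
-/

open Filter Real Topology

lemma tendsto_log_div_self_nhds_one : Tendsto (fun y : ℝ => log y / y) (𝓝 1) (𝓝 0) := by
  have h : ContinuousAt (fun y : ℝ => log y / y) 1 :=
    (continuousAt_log one_ne_zero).div continuousAt_id one_ne_zero
  simpa using h.tendsto

lemma tendsto_log_div_self_atTop : Tendsto (fun y : ℝ => log y / y) atTop (𝓝 0) :=
  isLittleO_log_id_atTop.tendsto_div_nhds_zero

lemma tendsto_one_div_nhdsGT_zero : Tendsto (fun t : ℝ => 1 / t) (𝓝[>] 0) atTop := by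
  simpa only [one_div] using tendsto_inv_nhdsGT_zero

lemma Finset.sum_abs_rpow_eq_abs_rpow_mul_sum {ι : Type*} (s : Finset ι) (x : ι → ℝ) {a : ℝ}
    (ha : a ≠ 0) (p : ℝ) : ∑ j ∈ s, |x j| ^ p = |a| ^ p * ∑ j ∈ s, |x j / a| ^ p := by
  rw [Finset.mul_sum]
  refine Finset.sum_congr rfl fun j _ => ?_
  rw [abs_div, div_rpow (abs_nonneg _) (abs_nonneg _),
    mul_div_cancel₀ _ (rpow_pos_of_pos (abs_pos.2 ha) p).ne']

section SumRpow

variable {ι : Type*} [Fintype ι]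

lemma tendsto_sum_rpow_atTop_nhds_one (b : ι → ℝ) (ℓ : ι) (hbℓ : b ℓ = 1)
    (hb : ∀ j, j ≠ ℓ → |b j| < 1) : Tendsto (fun p : ℝ => ∑ j, b j ^ p) atTop (𝓝 1) := by
  classical
  have hterm : ∀ j, Tendsto (fun p : ℝ => b j ^ p) atTop (𝓝 ((Pi.single ℓ 1 : ι → ℝ) j)) := by
    intro j
    rcases eq_or_ne j ℓ with rfl | hj
    · simp [hbℓ]
    · obtain ⟨hlo, hhi⟩ := abs_lt.1 (hb j hj)
      simpa [hj] using tendsto_rpow_atTop_of_base_lt_one (b j) hlo hhi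
  simpa using tendsto_finsetSum Finset.univ fun j _ => hterm j

lemma tendsto_sum_rpow_atTop_atTop (b : ι → ℝ) (hb : ∀ j, 0 ≤ b j) (ℓ : ι) (hbℓ : 1 < b ℓ) :
    Tendsto (fun p : ℝ => ∑ j, b j ^ p) atTop atTop :=
  tendsto_atTop_mono
    (fun p => Finset.single_le_sum (f := fun j => b j ^ p)
      (fun j _ => rpow_nonneg (hb j) p) (Finset.mem_univ ℓ))
    (tendsto_rpow_atTop_of_base_gt_one _ hbℓ)

lemma tendsto_log_sum_abs_div_rpow_div_sum (x : ι → ℝ) (ℓ : ι)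
    (hℓ : ∀ i, i ≠ ℓ → |x i| < |x ℓ|) (i : ι) (hx : x i ≠ 0) :
    Tendsto (fun p : ℝ => log (∑ j, |x j / x i| ^ p) / ∑ j, |x j / x i| ^ p) atTop (𝓝 0) := by
  have hxi : 0 < |x i| := abs_pos.2 hx
  rcases eq_or_ne i ℓ with rfl | hiℓ
  · refine tendsto_log_div_self_nhds_one.comp (tendsto_sum_rpow_atTop_nhds_one _ i ?_ ?_)
    · simp [hx]
    · intro j hj
      rw [abs_abs, abs_div, div_lt_one hxi]
      exact hℓ j hj
  · refine tendsto_log_div_self_atTop.comp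
      (tendsto_sum_rpow_atTop_atTop _ (fun j => abs_nonneg _) ℓ ?_)
    rw [abs_div, one_lt_div hxi]
    exact hℓ i hiℓ

end SumRpow

theorem summand_tendsto_zero (d : ℕ) (x : Fin d → ℝ) (ℓ : Fin d)
    (hℓ : ∀ i, i ≠ ℓ → |x i| < |x ℓ|) :
    ∀ i : Fin d, (i ≠ ℓ → x i ≠ 0) →
      Tendsto
        (fun t : ℝ =>
          |x i| ^ (1 / t) * Real.log (∑ j, |x j / x i| ^ (1 / t)) /
            (∑ j, |x j| ^ (1 / t)))
        (nhdsWithin 0 (Set.Ioi 0)) (nhds 0) := by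
  intro i _
  rcases eq_or_ne (x i) 0 with hx | hx
  · refine tendsto_const_nhds.congr' ?_
    filter_upwards [self_mem_nhdsWithin] with t ht
    rw [hx, abs_zero, zero_rpow (one_div_pos.2 ht).ne', zero_mul, zero_div]
  · refine ((tendsto_log_sum_abs_div_rpow_div_sum x ℓ hℓ i hx).comp
      tendsto_one_div_nhdsGT_zero).congr fun t => ?_
    rw [Function.comp_apply, Finset.sum_abs_rpow_eq_abs_rpow_mul_sum _ x hx,
      mul_div_mul_left _ _ (rpow_pos_of_pos (abs_pos.2 hx) _).ne']
end

section
/- Let U ⊆ ℝ^d be an open convex set and let (f_n) be a sequence of convex differentiable functions f_n : U → ℝ converging pointwise to a differentiable convex function f : U → ℝ. Then for every compact set K ⊂ U, the gradients ∇f_n converge to ∇f uniformly on K. -/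
/-!
A differentiable convex function satisfies the subgradient inequality
`g x + g'(x) (u - x) ≤ g u`, and at a point of differentiability `g'(x)` is the only linear map
with this property. A pointwise convergent sequence of convex functions is locally uniformly
bounded, hence locally equi-Lipschitz; so as `(n, y) → (∞, x)` the derivatives `fs n'(y)` stay
bounded and `fs n y → f x`. Every cluster point of `fs n'(y)` therefore inherits the subgradient
inequality of `f` at `x`, and must be `f'(x)`. Joint convergence in `(n, y)`, together with the
continuity of `f'` (the same argument for the constant sequence), is local uniform convergence,
that is, uniform convergence on compact sets.
-/

open Filter Metric Set Topology AffineMap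
open scoped NNReal

variable {E : Type*} [NormedAddCommGroup E] [NormedSpace ℝ E]

theorem ConvexOn.add_fderiv_sub_le {U : Set E} {g : E → ℝ} (hg : ConvexOn ℝ U g) {x y : E}
    (hx : x ∈ U) (hy : y ∈ U) (hd : DifferentiableAt ℝ g x) :
    g x + fderiv ℝ g x (y - x) ≤ g y := by
  have hline : HasDerivAt (g ∘ lineMap x y) (fderiv ℝ g x (y - x)) (0 : ℝ) := by
    have hd' := hd.hasFDerivAt
    rw [← lineMap_apply_zero x y (k := ℝ)] at hd'
    simpa using hd'.comp_hasDerivAt (0 : ℝ) hasDerivAt_lineMap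
  have := (hg.comp_affineMap (lineMap x y)).le_slope_of_hasDerivAt (by simpa) (by simpa)
    zero_lt_one hline
  simp only [slope, sub_zero, inv_one, one_smul, vsub_eq_sub, Function.comp_apply,
    lineMap_apply_one, lineMap_apply_zero] at this
  linarith

theorem eq_fderiv_of_forall_add_le {U : Set E} {g : E → ℝ} {x : E} (hU : U ∈ 𝓝 x)
    (hd : DifferentiableAt ℝ g x) {L : E →L[ℝ] ℝ}
    (hL : ∀ y ∈ U, g x + L (y - x) ≤ g y) :
    L = fderiv ℝ g x := by
  have hmin : IsLocalMin (fun y => g y - L y) x := by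
    filter_upwards [hU] with y hy
    linarith [hL y hy, map_sub L y x]
  have := hmin.hasFDerivAt_eq_zero (hd.hasFDerivAt.sub L.hasFDerivAt)
  exact (sub_eq_zero.1 this).symm

variable [FiniteDimensional ℝ E]

theorem tendsto_fderiv_of_convexOn {ι : Type*} {l : Filter ι} {U : Set E} (hU : IsOpen U)
    {g : ι → E → ℝ} {f : E → ℝ} {y : ι → E} {x : E} (hx : x ∈ U)
    (hg : ∀ i, ConvexOn ℝ U (g i)) (hgd : ∀ i, DifferentiableOn ℝ (g i) U)
    (hf : DifferentiableAt ℝ f x) {C : ℝ}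
    (hC : ∀ᶠ i in l, ‖fderiv ℝ (g i) (y i)‖ ≤ C)
    (hy : Tendsto y l (𝓝 x)) (hgy : Tendsto (fun i => g i (y i)) l (𝓝 (f x)))
    (hgf : ∀ u ∈ U, Tendsto (fun i => g i u) l (𝓝 (f u))) :
    Tendsto (fun i => fderiv ℝ (g i) (y i)) l (𝓝 (fderiv ℝ f x)) := by
  rw [tendsto_iff_ultrafilter]
  intro 𝒰 h𝒰
  obtain ⟨w, -, hw⟩ := (isCompact_closedBall (0 : E →L[ℝ] ℝ) C).ultrafilter_le_nhds
    (𝒰.map fun i => fderiv ℝ (g i) (y i))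
    (le_principal_iff.2 <| h𝒰 <| hC.mono fun i hi => mem_closedBall_zero_iff.2 hi)
  suffices w = fderiv ℝ f x from this ▸ hw
  refine eq_fderiv_of_forall_add_le (hU.mem_nhds hx) hf fun u hu => ?_
  have hyU : ∀ᶠ i in l, y i ∈ U := hy.eventually (hU.eventually_mem hx)
  have hsub : ∀ᶠ i in l, g i (y i) + fderiv ℝ (g i) (y i) (u - y i) ≤ g i u :=
    hyU.mono fun i hi => (hg i).add_fderiv_sub_le hi hu
      ((hgd i).differentiableAt (hU.mem_nhds hi))
  have happly : Tendsto (fun i => fderiv ℝ (g i) (y i) (u - y i)) 𝒰 (𝓝 (w (u - x))) :=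
    (isBoundedBilinearMap_apply.continuous.tendsto (w, u - x)).comp
      (Tendsto.prodMk_nhds hw ((tendsto_const_nhds.sub hy).mono_left h𝒰))
  exact le_of_tendsto_of_tendsto ((hgy.mono_left h𝒰).add happly) ((hgf u hu).mono_left h𝒰)
    (h𝒰 hsub)

theorem tendsto_fderiv_of_convexOn_of_lipschitzOnWith {ι : Type*} {l : Filter ι} {U : Set E}
    (hU : IsOpen U) {g : ι → E → ℝ} {f : E → ℝ} {y : ι → E} {x : E} (hx : x ∈ U)
    (hg : ∀ i, ConvexOn ℝ U (g i)) (hgd : ∀ i, DifferentiableOn ℝ (g i) U)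
    (hf : DifferentiableAt ℝ f x) {K : ℝ≥0} {s : Set E} (hs : s ∈ 𝓝 x)
    (hK : ∀ᶠ i in l, LipschitzOnWith K (g i) s) (hy : Tendsto y l (𝓝 x))
    (hgf : ∀ u ∈ U, Tendsto (fun i => g i u) l (𝓝 (f u))) :
    Tendsto (fun i => fderiv ℝ (g i) (y i)) l (𝓝 (fderiv ℝ f x)) := by
  have hys : ∀ᶠ i in l, y i ∈ interior s :=
    hy.eventually (isOpen_interior.mem_nhds (mem_interior_iff_mem_nhds.2 hs))
  refine tendsto_fderiv_of_convexOn hU hx hg hgd hf (C := K) ?_ hy ?_ hgf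
  · filter_upwards [hK, hys] with i hi hyi
    exact norm_fderiv_le_of_lipschitzOn ℝ (mem_interior_iff_mem_nhds.1 hyi) hi
  · have hdist : Tendsto (fun i => K * dist (y i) x) l (𝓝 0) := by
      simpa using (tendsto_iff_dist_tendsto_zero.1 hy).const_mul (K : ℝ)
    have hclose : Tendsto (fun i => g i (y i) - g i x) l (𝓝 0) := by
      refine squeeze_zero_norm' ?_ hdist
      filter_upwards [hK, hys] with i hi hyi
      exact hi.dist_le_mul _ (interior_subset hyi) _ (mem_of_mem_nhds hs)
    simpa using hclose.add (hgf x hx)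

theorem ConvexOn.continuousOn_fderiv {U : Set E} {f : E → ℝ} (hU : IsOpen U)
    (hf : ConvexOn ℝ U f) (hfd : DifferentiableOn ℝ f U) : ContinuousOn (fderiv ℝ f) U := by
  intro x hx
  obtain ⟨K, s, hs, hK⟩ := hf.locallyLipschitzOn hU hx
  rw [hU.nhdsWithin_eq hx] at hs
  exact (tendsto_fderiv_of_convexOn_of_lipschitzOnWith hU hx (fun _ => hf) (fun _ => hfd)
    (hfd.differentiableAt (hU.mem_nhds hx)) hs (.of_forall fun _ => hK) tendsto_id
    fun _ _ => tendsto_const_nhds).mono_left nhdsWithin_le_nhds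

theorem eventually_forall_abs_le_of_convexOn {ι : Type*} {U : Set E} (hU : IsOpen U)
    {g : ι → E → ℝ} (hg : ∀ i, ConvexOn ℝ U (g i))
    (hbdd : ∀ u ∈ U, BddAbove (range fun i => |g i u|)) {x : E} (hx : x ∈ U) :
    ∃ M, ∀ᶠ y in 𝓝 x, ∀ i, |g i y| ≤ M := by
  obtain ⟨b, hxb, hbU⟩ := exists_mem_interior_convexHull_affineBasis (hU.mem_nhds hx)
  obtain ⟨A, hA⟩ : ∃ A, ∀ j i, |g i (b j)| ≤ A := by
    choose B hB using fun j => hbdd (b j) (hbU (subset_convexHull ℝ _ (mem_range_self j)))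
    obtain ⟨A, hA⟩ := (finite_range B).bddAbove
    exact ⟨A, fun j i => (hB j (mem_range_self i)).trans (hA (mem_range_self j))⟩
  have hup : ∀ z ∈ convexHull ℝ (range b), ∀ i, g i z ≤ A := by
    intro z hz i
    obtain ⟨_, ⟨j, rfl⟩, hj⟩ :=
      (hg i).exists_ge_of_mem_convexHull ((subset_convexHull ℝ _).trans hbU) hz
    exact hj.trans ((le_abs_self _).trans (hA j i))
  obtain ⟨B, hB⟩ := hbdd x hx
  have hN : convexHull ℝ (range b) ∈ 𝓝 x := mem_interior_iff_mem_nhds.1 hxb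
  have hrefl : Tendsto (fun y => (2 : ℝ) • x - y) (𝓝 x) (𝓝 x) :=
    (continuous_const.sub continuous_id).tendsto' x x (by simp [two_smul])
  refine ⟨max A (A + 2 * B), ?_⟩
  filter_upwards [hN, hrefl.eventually hN] with y hy hy' i
  -- `x` is the midpoint of `y` and `2 • x - y`, so convexity bounds `g i y` from below
  have hmid := (hg i).2 (hbU hy) (hbU hy') (by norm_num : (0 : ℝ) ≤ 1 / 2)
    (by norm_num : (0 : ℝ) ≤ 1 / 2) (by norm_num)
  rw [show (1 / 2 : ℝ) • y + (1 / 2 : ℝ) • ((2 : ℝ) • x - y) = x by module, smul_eq_mul,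
    smul_eq_mul] at hmid
  have hgx := neg_abs_le (g i x) |>.trans' (neg_le_neg (hB (mem_range_self i)))
  have hgy' := hup _ hy' i
  rw [abs_le]
  constructor
  · linarith [le_max_right A (A + 2 * B)]
  · exact (hup y hy i).trans (le_max_left _ _)

theorem exists_mem_nhds_lipschitzOnWith_of_convexOn {ι : Type*} {U : Set E} (hU : IsOpen U)
    {g : ι → E → ℝ} (hg : ∀ i, ConvexOn ℝ U (g i))
    (hbdd : ∀ u ∈ U, BddAbove (range fun i => |g i u|)) {x : E} (hx : x ∈ U) :
    ∃ K : ℝ≥0, ∃ s ∈ 𝓝 x, ∀ i, LipschitzOnWith K (g i) s := by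
  obtain ⟨M, hM⟩ := eventually_forall_abs_le_of_convexOn hU hg hbdd hx
  obtain ⟨r, hr, hrM⟩ := eventually_nhds_iff_ball.1 (hM.and (hU.eventually_mem hx))
  refine ⟨(2 * M / (r / 2)).toNNReal, ball x (r - r / 2), ball_mem_nhds _ (by linarith),
    fun i => ?_⟩
  exact ((hg i).subset (fun y hy => (hrM y hy).2) (convex_ball x r)).lipschitzOnWith_of_abs_le
    (half_pos hr) fun a ha => (hrM a ha).1 i

theorem tendsto_fderiv_prod_nhds_of_convexOn {U : Set E} (hU : IsOpen U) {fs : ℕ → E → ℝ}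
    {f : E → ℝ} (hconv : ∀ n, ConvexOn ℝ U (fs n))
    (hdiff : ∀ n, DifferentiableOn ℝ (fs n) U)
    (hpt : ∀ u ∈ U, Tendsto (fun n => fs n u) atTop (𝓝 (f u))) {x : E} (hx : x ∈ U)
    (hf : DifferentiableAt ℝ f x) :
    Tendsto (fun q : ℕ × E => fderiv ℝ (fs q.1) q.2) (atTop ×ˢ 𝓝 x)
      (𝓝 (fderiv ℝ f x)) := by
  obtain ⟨K, s, hs, hK⟩ := exists_mem_nhds_lipschitzOnWith_of_convexOn hU hconv
    (fun u hu => (hpt u hu).abs.bddAbove_range) hx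
  exact tendsto_fderiv_of_convexOn_of_lipschitzOnWith hU hx (fun q => hconv q.1)
    (fun q => hdiff q.1) hf hs (.of_forall fun q => hK q.1) tendsto_snd
    fun u hu => (hpt u hu).comp tendsto_fst

theorem convex_pointwise_implies_uniform_deriv_general (d : ℕ)
    (U : Set (Fin d → ℝ)) (hUo : IsOpen U)
    (fs : ℕ → (Fin d → ℝ) → ℝ) (f : (Fin d → ℝ) → ℝ)
    (hconv : ∀ n, ConvexOn ℝ U (fs n))
    (hdiff : ∀ n, DifferentiableOn ℝ (fs n) U)
    (hfconv : ConvexOn ℝ U f)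
    (hfdiff : DifferentiableOn ℝ f U)
    (hpt : ∀ x ∈ U, Tendsto (fun n => fs n x) atTop (nhds (f x))) :
    ∀ K : Set (Fin d → ℝ), K ⊆ U → IsCompact K →
      TendstoUniformlyOn (fun n x => fderiv ℝ (fs n) x) (fun x => fderiv ℝ f x)
        atTop K := by
  intro K hKU hKc
  rw [← tendstoLocallyUniformlyOn_iff_tendstoUniformlyOn_of_compact hKc,
    tendstoLocallyUniformlyOn_iff_filter]
  intro x hx
  have hxU := hKU hx
  have hlim : Tendsto (fun q : ℕ × _ => fderiv ℝ f q.2) (atTop ×ˢ 𝓝[K] x)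
      (𝓝 (fderiv ℝ f x)) :=
    ((hfconv.continuousOn_fderiv hUo hfdiff).continuousAt (hUo.mem_nhds hxU)).tendsto.comp
      (tendsto_snd.mono_right nhdsWithin_le_nhds)
  have hseq := (tendsto_fderiv_prod_nhds_of_convexOn hUo hconv hdiff hpt hxU
    (hfdiff.differentiableAt (hUo.mem_nhds hxU))).mono_left
    (prod_mono_right _ (nhdsWithin_le_nhds (s := K)))
  exact (hlim.prodMk_nhds hseq).trans (nhds_le_uniformity _)

/-- Rockafellar: pointwise convergence of differentiable convex functions to a
differentiable convex function implies uniform convergence of derivatives on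
compact subsets. -/
theorem convex_pointwise_implies_uniform_deriv (d : ℕ)
    (U : Set (Fin d → ℝ)) (hUo : IsOpen U) (hUc : Convex ℝ U)
    (fs : ℕ → (Fin d → ℝ) → ℝ) (f : (Fin d → ℝ) → ℝ)
    (hconv : ∀ n, ConvexOn ℝ U (fs n))
    (hdiff : ∀ n, DifferentiableOn ℝ (fs n) U)
    (hfconv : ConvexOn ℝ U f)
    (hfdiff : DifferentiableOn ℝ f U)
    (hpt : ∀ x ∈ U, Tendsto (fun n => fs n x) atTop (nhds (f x))) :
    ∀ K : Set (Fin d → ℝ), K ⊆ U → IsCompact K →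
      TendstoUniformlyOn (fun n x => fderiv ℝ (fs n) x) (fun x => fderiv ℝ f x)
        atTop K :=
  convex_pointwise_implies_uniform_deriv_general d U hUo fs f hconv hdiff hfconv hfdiff hpt
end

section
/- For 0 < ε < 1/2 and d ≥ 1, define p : {1,...,d} ∪ {-1,...,-d} → ℝ^d by p(i) = (0,...,0, 1, ε, ..., ε) with the 1 in position i, and p(-i) = -p(i). Then for all 1 ≤ i < j ≤ d: the unique coordinate of maximal absolute value of p(i) - p(j) is coordinate i (with value 1), the unique coordinate of maximal absolute value of p(i) - p(-j) is coordinate j (with value 1 + ε), and the unique coordinate of maximal absolute value of p(i) - p(-i) is coordinate i (with value 2). -/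
/-- The realisation of `K_{2d}` used to build a rigid framework in `ℓ_∞^d`:
with `p i = (0,…,0,1,ε,…,ε)` (the `1` in position `i`) and `p (-i) = -p i`,
every difference of two distinct points has a unique coordinate of maximal
absolute value, as specified. -/
theorem k2d_realisation_well_positioned (d : ℕ) (ε : ℝ)
    (hε0 : 0 < ε) (hε : ε < 1 / 2)
    (P : Fin d → Fin d → ℝ)
    (hP : ∀ i j : Fin d, P i j = if j < i then 0 else if j = i then 1 else ε) :
    (∀ i j : Fin d, i < j →
      ((P i i - P j i = 1 ∧ ∀ m, m ≠ i → |P i m - P j m| < 1) ∧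
       (P i j + P j j = 1 + ε ∧ ∀ m, m ≠ j → |P i m + P j m| < 1 + ε))) ∧
    (∀ i : Fin d, 2 * P i i = 2 ∧ ∀ m, m ≠ i → |2 * P i m| < 2) := by
  constructor
  · intro i j hij
    refine ⟨⟨?_, ?_⟩, ?_, ?_⟩
    · rw [hP, hP]
      split_ifs <;> first | linarith | omega
    · intro m hm
      rw [hP, hP, abs_lt]
      split_ifs <;> constructor <;> first | linarith | omega
    · rw [hP, hP]
      split_ifs <;> first | linarith | omega
    · intro m hm
      rw [hP, hP, abs_lt]
      split_ifs <;> constructor <;> first | linarith | omega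
  · intro i
    constructor
    · rw [hP]
      split_ifs <;> first | linarith | omega
    · intro m hm
      rw [hP, abs_lt]
      split_ifs <;> constructor <;> first | linarith | omega
end
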